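/- arXiv:0812.3298 — 2 statements merged into one kernel-verified Lean document; each statement's English description precedes it below -/
import Mathlib

section
/- Define algebras H₁, H₂ to be isotyped if for every X the set of realized types coincides: {LKer(μ) | μ : W(X) → H₁} = {LKer(ν) | ν : W(X) → H₂}. Define them to be LG-equivalent if for every X and every T ⊆ Φ(X) the double closures agree: T^{LL}_{H₁} = T^{LL}_{H₂}. Then H₁ and H₂ are LG-equivalent if and only if they are isotyped. (Abstract version: given two Boolean algebra homomorphisms Val₁ : Φ → Set P₁ and Val₂ : Φ → Set P₂, the families of logical kernels {LKer₁(μ) : μ ∈ P₁} and {LKer₂(ν) : ν ∈ P₂} coincide if and only if for every T ⊆ Φ the closures T^{L₁L₁} and T^{L₂L₂} coincide.) -/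
/-!
The closure `T^{LL}` is the intersection of all kernels containing `T`, so it only depends on the
family of kernels. Conversely, if the closures agree, fix `μ ∈ P₁`: the closure of `LKer₁(μ)` is
proper (it lies in `LKer₁(μ)`), so some `ν ∈ P₂` has `LKer₁(μ) ⊆ LKer₂(ν)`. Kernels contain exactly
one of `u`, `uᶜ` for each `u`, hence cannot be properly nested, and `LKer₁(μ) = LKer₂(ν)`.
-/

section LogicalKernels

variable {Φ P Q : Type*}

def lKer (Val : Φ → Set P) (μ : P) : Set Φ := {u | μ ∈ Val u}

/-- `T^L`: the points satisfying every formula of `T`. -/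
def lPoints (Val : Φ → Set P) (T : Set Φ) : Set P := {μ | ∀ v ∈ T, μ ∈ Val v}

/-- `A^L`: the formulas satisfied by every point of `A`. -/
def lFormulas (Val : Φ → Set P) (A : Set P) : Set Φ := {u | ∀ μ ∈ A, μ ∈ Val u}

theorem lFormulas_lPoints_eq (Val : Φ → Set P) (T : Set Φ) :
    lFormulas Val (lPoints Val T) = {u | ∀ K ∈ Set.range (lKer Val), T ⊆ K → u ∈ K} := by
  ext u
  simp only [lFormulas, lPoints, lKer, Set.mem_ofPred_eq, Set.forall_mem_range]
  rfl

theorem lFormulas_lPoints_eq_of_range_lKer_eq {Val₁ : Φ → Set P} {Val₂ : Φ → Set Q}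
    (h : Set.range (lKer Val₁) = Set.range (lKer Val₂)) (T : Set Φ) :
    lFormulas Val₁ (lPoints Val₁ T) = lFormulas Val₂ (lPoints Val₂ T) := by
  rw [lFormulas_lPoints_eq, lFormulas_lPoints_eq, h]

theorem mem_lPoints_lKer (Val : Φ → Set P) (μ : P) : μ ∈ lPoints Val (lKer Val μ) :=
  fun _ hv => hv

theorem lFormulas_subset_lKer {Val : Φ → Set P} {A : Set P} {μ : P} (hμ : μ ∈ A) :
    lFormulas Val A ⊆ lKer Val μ :=
  fun _ hu => hu μ hμ

theorem lFormulas_empty (Val : Φ → Set P) : lFormulas Val ∅ = Set.univ :=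
  Set.eq_univ_of_forall fun _ _ hμ => hμ.elim

theorem lKer_ne_univ [Compl Φ] [Nonempty Φ] {Val : Φ → Set P}
    (hCompl : ∀ u, Val uᶜ = (Val u)ᶜ) (μ : P) : lKer Val μ ≠ Set.univ := by
  intro h
  obtain ⟨u⟩ := ‹Nonempty Φ›
  have hu : u ∈ lKer Val μ := h ▸ Set.mem_univ u
  have hcu : uᶜ ∈ lKer Val μ := h ▸ Set.mem_univ uᶜ
  rw [lKer, Set.mem_ofPred_eq, hCompl] at hcu
  exact hcu hu

theorem lKer_eq_of_subset [Compl Φ] {Val₁ : Φ → Set P} {Val₂ : Φ → Set Q}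
    (hCompl₁ : ∀ u, Val₁ uᶜ = (Val₁ u)ᶜ) (hCompl₂ : ∀ u, Val₂ uᶜ = (Val₂ u)ᶜ) {μ : P} {ν : Q}
    (h : lKer Val₁ μ ⊆ lKer Val₂ ν) : lKer Val₁ μ = lKer Val₂ ν := by
  refine h.antisymm fun u hν => by_contra fun hμ => ?_
  have hcμ : uᶜ ∈ lKer Val₁ μ := by
    rw [lKer, Set.mem_ofPred_eq, hCompl₁]
    exact hμ
  have hcν : ν ∈ Val₂ uᶜ := h hcμ
  rw [hCompl₂] at hcν
  exact hcν hν

theorem range_lKer_subset_of_lFormulas_lPoints_eq [Compl Φ] [Nonempty Φ]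
    {Val₁ : Φ → Set P} {Val₂ : Φ → Set Q}
    (hCompl₁ : ∀ u, Val₁ uᶜ = (Val₁ u)ᶜ) (hCompl₂ : ∀ u, Val₂ uᶜ = (Val₂ u)ᶜ)
    (h : ∀ T, lFormulas Val₁ (lPoints Val₁ T) = lFormulas Val₂ (lPoints Val₂ T)) :
    Set.range (lKer Val₁) ⊆ Set.range (lKer Val₂) := by
  rintro _ ⟨μ, rfl⟩
  obtain ⟨ν, hν⟩ : (lPoints Val₂ (lKer Val₁ μ)).Nonempty := by
    refine Set.nonempty_iff_ne_empty.mpr fun hempty => lKer_ne_univ hCompl₁ μ ?_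
    refine Set.eq_univ_of_univ_subset ?_
    calc Set.univ = lFormulas Val₂ (lPoints Val₂ (lKer Val₁ μ)) := by
          rw [hempty, lFormulas_empty]
      _ = lFormulas Val₁ (lPoints Val₁ (lKer Val₁ μ)) := (h _).symm
      _ ⊆ lKer Val₁ μ := lFormulas_subset_lKer (mem_lPoints_lKer Val₁ μ)
  exact ⟨ν, (lKer_eq_of_subset hCompl₁ hCompl₂ hν).symm⟩

end LogicalKernels

theorem lg_equivalent_iff_isotyped_general {Φ P₁ P₂ : Type*} [BooleanAlgebra Φ]
    (Val₁ : Φ → Set P₁) (Val₂ : Φ → Set P₂)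
    (hCompl₁ : ∀ u, Val₁ uᶜ = (Val₁ u)ᶜ)
    (hCompl₂ : ∀ u, Val₂ uᶜ = (Val₂ u)ᶜ) :
    ((Set.range fun μ : P₁ => {u : Φ | μ ∈ Val₁ u}) =
        (Set.range fun ν : P₂ => {u : Φ | ν ∈ Val₂ u})) ↔
      ∀ T : Set Φ,
        {u : Φ | ∀ μ ∈ {μ : P₁ | ∀ v ∈ T, μ ∈ Val₁ v}, μ ∈ Val₁ u} =
          {u : Φ | ∀ ν ∈ {ν : P₂ | ∀ v ∈ T, ν ∈ Val₂ v}, ν ∈ Val₂ u} := by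
  change Set.range (lKer Val₁) = Set.range (lKer Val₂) ↔
    ∀ T, lFormulas Val₁ (lPoints Val₁ T) = lFormulas Val₂ (lPoints Val₂ T)
  refine ⟨lFormulas_lPoints_eq_of_range_lKer_eq, fun h => ?_⟩
  exact (range_lKer_subset_of_lFormulas_lPoints_eq hCompl₁ hCompl₂ h).antisymm
    (range_lKer_subset_of_lFormulas_lPoints_eq hCompl₂ hCompl₁ fun T => (h T).symm)

/-- `H₁` and `H₂` are LG-equivalent if and only if they are isotyped
(abstract version for two value homomorphisms into powerset algebras). -/
theorem lg_equivalent_iff_isotyped {Φ P₁ P₂ : Type*} [BooleanAlgebra Φ]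
    (Val₁ : Φ → Set P₁) (Val₂ : Φ → Set P₂)
    (hTop₁ : Val₁ ⊤ = Set.univ) (hBot₁ : Val₁ ⊥ = ∅)
    (hInf₁ : ∀ u v, Val₁ (u ⊓ v) = Val₁ u ∩ Val₁ v)
    (hSup₁ : ∀ u v, Val₁ (u ⊔ v) = Val₁ u ∪ Val₁ v)
    (hCompl₁ : ∀ u, Val₁ uᶜ = (Val₁ u)ᶜ)
    (hTop₂ : Val₂ ⊤ = Set.univ) (hBot₂ : Val₂ ⊥ = ∅)
    (hInf₂ : ∀ u v, Val₂ (u ⊓ v) = Val₂ u ∩ Val₂ v)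
    (hSup₂ : ∀ u v, Val₂ (u ⊔ v) = Val₂ u ∪ Val₂ v)
    (hCompl₂ : ∀ u, Val₂ uᶜ = (Val₂ u)ᶜ) :
    ((Set.range fun μ : P₁ => {u : Φ | μ ∈ Val₁ u}) =
        (Set.range fun ν : P₂ => {u : Φ | ν ∈ Val₂ u})) ↔
      ∀ T : Set Φ,
        {u : Φ | ∀ μ ∈ {μ : P₁ | ∀ v ∈ T, μ ∈ Val₁ v}, μ ∈ Val₁ u} =
          {u : Φ | ∀ ν ∈ {ν : P₂ | ∀ v ∈ T, ν ∈ Val₂ v}, ν ∈ Val₂ u} :=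
  lg_equivalent_iff_isotyped_general Val₁ Val₂ hCompl₁ hCompl₂
end

section
/- Let p be a prime and H an infinite abelian group satisfying x^p = 1 for all x (i.e., an infinite vector space over 𝔽_p). Then for every n, the action of Aut(H) on Hⁿ has only finitely many orbits; moreover two tuples (a₁,…,aₙ) and (b₁,…,bₙ) lie in the same orbit if and only if they satisfy the same linear relations, i.e., for all integer coefficients (c₁,…,cₙ), ∑cᵢaᵢ = 0 iff ∑cᵢbᵢ = 0. -/
/-!
Since `p • x = 0`, the group is a vector space over `𝔽_p`, and its integer relations are its
`𝔽_p`-relations. If two tuples satisfy the same relations, `aᵢ ↦ bᵢ` is a well-defined linear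
isomorphism between their (finite-dimensional) spans; it extends to an automorphism by any
isomorphism between complements, which exists because cancelling the equal finite dimensions of
the spans gives the two quotients, hence the complements, equal rank. An orbit is therefore
determined by its set of relations, a subset of the finite set `𝔽_pⁿ`, so there are finitely
many orbits.
-/

open Submodule

section DivisionRing

variable {K V : Type*} [DivisionRing K] [AddCommGroup V] [Module K V]

theorem Submodule.rank_quotient_eq_of_rank_eq {W W' : Submodule K V} [FiniteDimensional K W]
    (h : Module.rank K W = Module.rank K W') :
    Module.rank K (V ⧸ W) = Module.rank K (V ⧸ W') :=
  Cardinal.eq_of_add_eq_add_right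
    (by rw [rank_quotient_add_rank, h, rank_quotient_add_rank]) (Module.rank_lt_aleph0 K W)

theorem LinearEquiv.exists_extend_of_finiteDimensional {W W' : Submodule K V}
    [FiniteDimensional K W] (e : W ≃ₗ[K] W') : ∃ σ : V ≃ₗ[K] V, ∀ x : W, σ x = e x := by
  obtain ⟨U, hU⟩ := W.exists_isCompl
  obtain ⟨U', hU'⟩ := W'.exists_isCompl
  have hrank : Module.rank K U = Module.rank K U' := by
    rw [← (quotientEquivOfIsCompl _ _ hU).rank_eq, ← (quotientEquivOfIsCompl _ _ hU').rank_eq]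
    exact rank_quotient_eq_of_rank_eq e.rank_eq
  obtain ⟨u⟩ := nonempty_linearEquiv_of_rank_eq hrank
  refine ⟨(prodEquivOfIsCompl _ _ hU).symm.trans ((e.prodCongr u).trans
    (prodEquivOfIsCompl _ _ hU')), fun x => ?_⟩
  simp

theorem LinearMap.exists_linearEquiv_comp_eq_of_ker_eq {M : Type*} [AddCommGroup M] [Module K M]
    [FiniteDimensional K M] {f g : M →ₗ[K] V} (h : ker f = ker g) :
    ∃ σ : V ≃ₗ[K] V, σ.toLinearMap ∘ₗ f = g := by
  let e := (f.quotKerEquivRange.symm.trans (quotEquivOfEq _ _ h)).trans g.quotKerEquivRange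
  obtain ⟨σ, hσ⟩ := e.exists_extend_of_finiteDimensional
  refine ⟨σ, LinearMap.ext fun x => ?_⟩
  simp [hσ ⟨f x, mem_range_self f x⟩, e, quotKerEquivRange_symm_apply_image]

theorem exists_linearEquiv_apply_eq_of_forall_sum_smul_eq_zero_iff {ι : Type*} [Fintype ι]
    {a b : ι → V} (h : ∀ c : ι → K, ∑ i, c i • a i = 0 ↔ ∑ i, c i • b i = 0) :
    ∃ σ : V ≃ₗ[K] V, ∀ i, σ (a i) = b i := by
  classical
  obtain ⟨σ, hσ⟩ := LinearMap.exists_linearEquiv_comp_eq_of_ker_eq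
    (f := Fintype.linearCombination K a) (g := Fintype.linearCombination K b)
    (by ext c; simpa [Fintype.linearCombination_apply] using h c)
  refine ⟨σ, fun i => ?_⟩
  simpa using LinearMap.congr_fun hσ (Pi.single i 1)

end DivisionRing

theorem AddEquiv.sum_zsmul_map_eq_zero_iff {G G' ι : Type*} [AddCommGroup G] [AddCommGroup G']
    [Fintype ι] (σ : G ≃+ G') (c : ι → ℤ) (a : ι → G) :
    ∑ i, c i • σ (a i) = 0 ↔ ∑ i, c i • a i = 0 := by
  simp [← map_zsmul, ← map_sum]

theorem ZMod.forall_int_relation_iff {n : ℕ} {H ι : Type*} [AddCommGroup H] [Module (ZMod n) H]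
    [Fintype ι] {a b : ι → H} :
    (∀ c : ι → ℤ, ∑ i, c i • a i = 0 ↔ ∑ i, c i • b i = 0) ↔
      ∀ c : ι → ZMod n, ∑ i, c i • a i = 0 ↔ ∑ i, c i • b i = 0 := by
  simp only [← Int.cast_smul_eq_zsmul (ZMod n)]
  exact ((Function.Surjective.piMap fun _ => ZMod.intCast_surjective).forall
    (p := fun c : ι → ZMod n => ∑ i, c i • a i = 0 ↔ ∑ i, c i • b i = 0)).symm

theorem elementary_abelian_aut_finitary_general {H : Type*} [AddCommGroup H]
    (p : ℕ) (hp : p.Prime) (hExp : ∀ x : H, p • x = 0) (n : ℕ) :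
    (Set.Finite (Set.range fun a : Fin n → H =>
        {b : Fin n → H | ∃ σ : AddAut H, ∀ i, σ (a i) = b i})) ∧
      ∀ a b : Fin n → H,
        (∃ σ : AddAut H, ∀ i, σ (a i) = b i) ↔
          ∀ c : Fin n → ℤ, (∑ i, c i • a i = 0 ↔ ∑ i, c i • b i = 0) := by
  have : Fact p.Prime := ⟨hp⟩
  let : Module (ZMod p) H := AddCommGroup.zmodModule hExp
  have orbit_iff (a b : Fin n → H) : (∃ σ : AddAut H, ∀ i, σ (a i) = b i) ↔
      ∀ c : Fin n → ZMod p, ∑ i, c i • a i = 0 ↔ ∑ i, c i • b i = 0 := by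
    refine ⟨fun ⟨σ, hσ⟩ => ZMod.forall_int_relation_iff.1 fun c => ?_, fun h => ?_⟩
    · simp only [← hσ, σ.sum_zsmul_map_eq_zero_iff]
    · obtain ⟨σ, hσ⟩ := exists_linearEquiv_apply_eq_of_forall_sum_smul_eq_zero_iff h
      exact ⟨σ.toAddEquiv, hσ⟩
  refine ⟨?_, fun a b => (orbit_iff a b).trans ZMod.forall_int_relation_iff.symm⟩
  refine (Set.finite_range fun R : (Fin n → ZMod p) → Prop =>
    {b : Fin n → H | ∀ c, R c ↔ ∑ i, c i • b i = 0}).subset ?_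
  rintro _ ⟨a, rfl⟩
  exact ⟨_, Set.ext fun b => (orbit_iff a b).symm⟩

/-- An infinite abelian group of prime exponent `p` is automorphically finitary:
the diagonal action of `Aut H` on `Hⁿ` has finitely many orbits, and two tuples
are in the same orbit iff they satisfy the same linear relations. -/
theorem elementary_abelian_aut_finitary {H : Type*} [AddCommGroup H] [Infinite H]
    (p : ℕ) (hp : p.Prime) (hExp : ∀ x : H, p • x = 0) (n : ℕ) :
    (Set.Finite (Set.range fun a : Fin n → H =>
        {b : Fin n → H | ∃ σ : AddAut H, ∀ i, σ (a i) = b i})) ∧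
      ∀ a b : Fin n → H,
        (∃ σ : AddAut H, ∀ i, σ (a i) = b i) ↔
          ∀ c : Fin n → ℤ, (∑ i, c i • a i = 0 ↔ ∑ i, c i • b i = 0) :=
  elementary_abelian_aut_finitary_general p hp hExp n
end
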